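/- Let n ≥ 1, let s be an n-bit string, let A be a set of n-bit strings with |A| = 2^q, let e : A → ZMod 2 be noise bits, and let ψ be the associated noisy quantum sample state. Then the probability of measuring k* = 1 after the Walsh–Hadamard transform equals exactly 1/2; that is, ∑_{𝐤 over all n-bit strings} |(W_{n+1} ψ)(𝐤, 1)|² = 1/2, regardless of the noise bits e. -/

import Mathlib

open scoped BigOperators

/-- `χ(x) = (-1)^x` for a bit `x ∈ ZMod 2`. -/
noncomputable def chi (x : ZMod 2) : ℂ := (-1 : ℂ) ^ x.val

/-- The `(n+1)`-bit Walsh–Hadamard transform, where an `(n+1)`-bit string is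
identified with a pair of an `n`-bit string and a bit, and the dot product of
`(a, b)` and `(𝐤, k⋆)` is `a·𝐤 + b·k⋆`. -/
noncomputable def WH (n : ℕ) (f : ((Fin n → ZMod 2) × ZMod 2) → ℂ)
    (k : (Fin n → ZMod 2) × ZMod 2) : ℂ :=
  ((Real.sqrt (2 ^ (n + 1)) : ℝ) : ℂ)⁻¹ *
    ∑ j : (Fin n → ZMod 2) × ZMod 2,
      chi ((∑ i, j.1 i * k.1 i) + j.2 * k.2) * f j


/-!
Split the transform along the last bit: `(W ψ)(𝐤, 1)` is `2^{-(n+1)/2}` times the `n`-bit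
Walsh–Hadamard sum of `g a = ∑_b χ(b) ψ(a, b)`, so by Parseval the probability is
`2^{-(n+1)} · 2^n · ∑_a |g a|² = ½ ∑_a |g a|²`. Since `ψ(a, ·)` is supported on the single bit
`a·s + e(a)`, `|g a|² = |ψ(a, a·s + e(a))|²`, and these sum to `|A| / 2^q = 1` whatever the noise.
-/

open Finset

lemma chi_zero : chi 0 = 1 := by simp [chi]

lemma chi_add (x y : ZMod 2) : chi (x + y) = chi x * chi y := by
  rw [chi, chi, chi, ZMod.val_add, ← pow_add, neg_one_pow_eq_pow_mod_two (x.val + y.val)]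

lemma star_chi (x : ZMod 2) : starRingEnd ℂ (chi x) = chi x := by simp [chi]

lemma norm_chi (x : ZMod 2) : ‖chi x‖ = 1 := by simp [chi]

lemma chi_sum {ι : Type*} [DecidableEq ι] (s : Finset ι) (f : ι → ZMod 2) :
    chi (∑ i ∈ s, f i) = ∏ i ∈ s, chi (f i) := by
  induction s using Finset.induction_on with
  | empty => exact chi_zero
  | insert i s hi ih => rw [sum_insert hi, prod_insert hi, chi_add, ih]

lemma sum_chi_mul (v : ZMod 2) : ∑ b : ZMod 2, chi (v * b) = if v = 0 then 2 else 0 := by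
  rw [show (univ : Finset (ZMod 2)) = {0, 1} from rfl]
  obtain rfl | rfl : v = 0 ∨ v = 1 := by revert v; decide
  all_goals norm_num [chi, ZMod.val_one]

lemma pi_add_eq_zero_iff_eq {ι R : Type*} [Ring R] [CharP R 2] {a b : ι → R} :
    a + b = 0 ↔ a = b := by
  simp only [funext_iff, Pi.add_apply, Pi.zero_apply, CharTwo.add_eq_zero]

section Orthogonality

variable {ι : Type*} [Fintype ι] [DecidableEq ι]

lemma sum_chi_dotProduct (v : ι → ZMod 2) :
    ∑ k : ι → ZMod 2, chi (v ⬝ᵥ k) = if v = 0 then 2 ^ Fintype.card ι else 0 := by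
  simp_rw [dotProduct, chi_sum, ← Fintype.prod_sum fun i b => chi (v i * b), sum_chi_mul]
  split_ifs with hv
  · simp [hv]
  · obtain ⟨i, hi⟩ := Function.ne_iff.mp hv
    exact prod_eq_zero (mem_univ i) (if_neg hi)

lemma sum_chi_dotProduct_mul_chi_dotProduct (a b : ι → ZMod 2) :
    ∑ k : ι → ZMod 2, chi (a ⬝ᵥ k) * chi (b ⬝ᵥ k) =
      if a = b then 2 ^ Fintype.card ι else 0 := by
  simp_rw [← chi_add, ← add_dotProduct, sum_chi_dotProduct, pi_add_eq_zero_iff_eq]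

lemma sum_norm_sq_sum_chi_dotProduct_mul (f : (ι → ZMod 2) → ℂ) :
    ∑ k : ι → ZMod 2, ‖∑ a, chi (a ⬝ᵥ k) * f a‖ ^ 2 =
      2 ^ Fintype.card ι * ∑ a, ‖f a‖ ^ 2 := by
  suffices h : ∑ k : ι → ZMod 2, ((‖∑ a, chi (a ⬝ᵥ k) * f a‖ ^ 2 : ℝ) : ℂ) =
      2 ^ Fintype.card ι * ∑ a, ((‖f a‖ ^ 2 : ℝ) : ℂ) by exact_mod_cast h
  calc ∑ k : ι → ZMod 2, ((‖∑ a, chi (a ⬝ᵥ k) * f a‖ ^ 2 : ℝ) : ℂ)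
      = ∑ a, ∑ b, f a * starRingEnd ℂ (f b) * ∑ k, chi (a ⬝ᵥ k) * chi (b ⬝ᵥ k) := by
        simp_rw [Complex.ofReal_pow, ← Complex.mul_conj', map_sum, map_mul, star_chi,
          sum_mul_sum, mul_sum]
        rw [sum_comm]
        refine sum_congr rfl fun a _ => ?_
        rw [sum_comm]
        exact sum_congr rfl fun b _ => sum_congr rfl fun k _ => by ring
    _ = 2 ^ Fintype.card ι * ∑ a, ((‖f a‖ ^ 2 : ℝ) : ℂ) := by
        simp [sum_chi_dotProduct_mul_chi_dotProduct, Complex.mul_conj', mul_sum, mul_comm]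

end Orthogonality

lemma WH_apply_snd_one {n : ℕ} (f : ((Fin n → ZMod 2) × ZMod 2) → ℂ) (k : Fin n → ZMod 2) :
    WH n f (k, 1) =
      ((√(2 ^ (n + 1)) : ℝ) : ℂ)⁻¹ * ∑ a, chi (a ⬝ᵥ k) * ∑ b, chi b * f (a, b) := by
  simp_rw [WH, Fintype.sum_prod_type, mul_one, chi_add, mul_sum, mul_assoc]
  rfl

lemma sum_norm_sq_WH_snd_one {n : ℕ} (f : ((Fin n → ZMod 2) × ZMod 2) → ℂ) :
    ∑ k : Fin n → ZMod 2, ‖WH n f (k, 1)‖ ^ 2 = (∑ a, ‖∑ b, chi b * f (a, b)‖ ^ 2) / 2 := by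
  simp_rw [WH_apply_snd_one, norm_mul, mul_pow, ← mul_sum, sum_norm_sq_sum_chi_dotProduct_mul,
    Fintype.card_fin, norm_inv, Complex.norm_real, Real.norm_eq_abs, inv_pow, sq_abs,
    Real.sq_sqrt (by positivity : (0 : ℝ) ≤ 2 ^ (n + 1)), pow_succ]
  field_simp

theorem measure_kstar_one_probability_general (n q : ℕ)
    (s : Fin n → ZMod 2) (A : Finset (Fin n → ZMod 2)) (hA : A.card = 2 ^ q)
    (e : (Fin n → ZMod 2) → ZMod 2)
    (ψ : ((Fin n → ZMod 2) × ZMod 2) → ℂ)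
    (hψ : ∀ a b, ψ (a, b) =
      if a ∈ A ∧ b = (∑ i, a i * s i) + e a then
        ((Real.sqrt (2 ^ q) : ℝ) : ℂ)⁻¹ else 0) :
    ∑ k : Fin n → ZMod 2, ‖WH n ψ (k, 1)‖ ^ 2 = 1 / 2 := by
  have hrow : ∀ a, ‖∑ b, chi b * ψ (a, b)‖ ^ 2 = if a ∈ A then ((2 : ℝ) ^ q)⁻¹ else 0 := by
    intro a
    by_cases ha : a ∈ A
    · simp [hψ, ha, norm_chi]
    · simp [hψ, ha]
  rw [sum_norm_sq_WH_snd_one, sum_congr rfl fun a _ => hrow a, sum_ite_mem, univ_inter,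
    sum_const, hA, nsmul_eq_mul, Nat.cast_pow, Nat.cast_ofNat]
  field_simp

/-- The probability of measuring `k⋆ = 1` after the Walsh–Hadamard transform of
the noisy quantum sample state equals exactly `1/2`, regardless of the noise:
`∑_𝐤 |(W ψ)(𝐤, 1)|² = 1/2`. -/
theorem measure_kstar_one_probability (n q : ℕ) (hn : 1 ≤ n) (hq : q ≤ n)
    (s : Fin n → ZMod 2) (A : Finset (Fin n → ZMod 2)) (hA : A.card = 2 ^ q)
    (e : (Fin n → ZMod 2) → ZMod 2)
    (ψ : ((Fin n → ZMod 2) × ZMod 2) → ℂ)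
    (hψ : ∀ a b, ψ (a, b) =
      if a ∈ A ∧ b = (∑ i, a i * s i) + e a then
        ((Real.sqrt (2 ^ q) : ℝ) : ℂ)⁻¹ else 0) :
    ∑ k : Fin n → ZMod 2, ‖WH n ψ (k, 1)‖ ^ 2 = 1 / 2 :=
  measure_kstar_one_probability_general n q s A hA e ψ hψ
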